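/- arXiv:1807.00690 — 3 statements merged into one kernel-verified Lean document; each statement's English description precedes it below -/
import Mathlib

section
/- In any Boolean algebra with an operator c satisfying c(0) = 0, x ≤ c(x), and c(x · c(y)) = c(x) · c(y) for all x, y, the operator c is additive: c(x + y) = c(x) + c(y), and idempotent: c(c(x)) = c(x). -/
theorem stmt_7 {B : Type*} [BooleanAlgebra B] (c : B → B)
    (h0 : c ⊥ = ⊥) (h1 : ∀ x, x ≤ c x)
    (h2 : ∀ x y, c (x ⊓ c y) = c x ⊓ c y) :
    (∀ x y, c (x ⊔ y) = c x ⊔ c y) ∧ (∀ x, c (c x) = c x) := by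
  -- monotonicity-type lemma: x ≤ c y → c x ≤ c y
  have mono : ∀ x y : B, x ≤ c y → c x ≤ c y := by
    intro x y hxy
    have h := h2 x y
    rw [inf_eq_left.mpr hxy] at h
    rw [h]
    exact inf_le_right
  -- idempotence
  have idem : ∀ x : B, c (c x) = c x := by
    intro x
    refine le_antisymm ?_ (h1 _)
    have h := h2 (c x) x
    rw [inf_idem] at h
    rw [h]
    exact inf_le_right
  -- complement of a closed element is closed
  have complc : ∀ y : B, c ((c y)ᶜ) = (c y)ᶜ := by
    intro y
    refine le_antisymm ?_ (h1 _)
    have h := h2 ((c y)ᶜ) y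
    rw [compl_inf_self, h0] at h
    have hd : Disjoint (c ((c y)ᶜ)) (c y) := disjoint_iff.mpr h.symm
    exact le_compl_iff_disjoint_right.mpr hd
  -- c x ⊔ c y is closed
  have supc : ∀ x y : B, c (c x ⊔ c y) = c x ⊔ c y := by
    intro x y
    have hz : c ((c x)ᶜ ⊓ (c y)ᶜ) = (c x)ᶜ ⊓ (c y)ᶜ := by
      have h := h2 ((c x)ᶜ) ((c y)ᶜ)
      rw [complc y] at h
      rw [h, complc x]
    have h := complc ((c x)ᶜ ⊓ (c y)ᶜ)
    rw [hz, compl_inf, compl_compl, compl_compl] at h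
    exact h
  refine ⟨?_, idem⟩
  intro x y
  refine le_antisymm ?_ (sup_le (mono _ _ (le_sup_left.trans (h1 _)))
    (mono _ _ (le_sup_right.trans (h1 _))))
  have hle : x ⊔ y ≤ c (c x ⊔ c y) := by
    rw [supc]
    exact sup_le_sup (h1 x) (h1 y)
  have := mono (x ⊔ y) (c x ⊔ c y) hle
  rwa [supc] at this
end

section
/- With normal forms F_k(X;n) as defined, for every k and every normal form ρ ∈ F_{k+1}(X;n) there is a unique σ ∈ F_k(X;n) such that ρ ≤ σ holds in every Boolean algebra with operators satisfying cᵢ0 = 0, x ≤ cᵢx, cᵢ(x·cᵢy) = cᵢx·cᵢy, provided ρ ≠ 0 is satisfiable in some such algebra. -/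
universe u

/-- Index type for the normal forms `F_k(X;n)`. -/
def Ix (X ι : Type u) : ℕ → Type u
  | 0 => X → Bool
  | k + 1 => (X → Bool) × (ι × Ix X ι k → Bool)

noncomputable instance ixFintype (X ι : Type u) [Fintype X] [Fintype ι] :
    ∀ k, Fintype (Ix X ι k)
  | 0 => by classical unfold Ix; infer_instance
  | k + 1 => by classical have := ixFintype X ι k; unfold Ix; infer_instance

/-- A literal: the element itself or its complement, according to the sign. -/
def lit {B : Type*} [BooleanAlgebra B] (b : B) : Bool → B
  | true => b
  | false => bᶜ

/-- The normal form of degree `k` with index `a`, evaluated in a Boolean algebra with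
operators `c i` under the valuation `v` of the variables. -/
noncomputable def nf {X ι : Type u} {B : Type*} [Fintype X] [Fintype ι] [BooleanAlgebra B]
    (v : X → B) (c : ι → B → B) : ∀ k, Ix X ι k → B
  | 0, β => Finset.univ.inf fun x => lit (v x) (β x)
  | k + 1, (β, γ) =>
      (Finset.univ.inf fun x => lit (v x) (β x)) ⊓
        Finset.univ.inf fun p : ι × Ix X ι k => lit (c p.1 (nf v c k p.2)) (γ p)


/-! The witness is the truncation of `ρ`: it keeps the variable literals of `ρ` and makes `cᵢ σ`
positive iff `cᵢ σ` is positive in some `τ` with `cᵢ τ` positive in `ρ`. In the positive case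
`ρ ≤ cᵢ τ ≤ cᵢ cᵢ σ = cᵢ σ`. In the negative case, if some `cᵢ τ₀` is positive in `ρ`, then `τ₀`
is disjoint from `cᵢ σ`, and `cᵢ (τ₀ ⊓ cᵢ σ) = cᵢ τ₀ ⊓ cᵢ σ` makes `ρ` disjoint from `cᵢ σ`;
otherwise `ρ` is disjoint from every `cᵢ τ ≥ τ`, hence from the join of all forms of degree `k`,
which is `⊤`. Uniqueness: distinct forms of one degree are disjoint, so a nonzero `ρ` lies below
at most one. -/

open Finset

structure IsCylindrification {B : Type*} [BooleanAlgebra B] (c : B → B) : Prop where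
  map_bot : c ⊥ = ⊥
  le_map : ∀ x, x ≤ c x
  map_inf_map : ∀ x y, c (x ⊓ c y) = c x ⊓ c y

namespace IsCylindrification

variable {B : Type*} [BooleanAlgebra B] {c : B → B}

theorem monotone (hc : IsCylindrification c) : Monotone c := fun x y hxy => by
  calc c x = c (x ⊓ c y) := by rw [inf_eq_left.2 (hxy.trans (hc.le_map y))]
    _ = c x ⊓ c y := hc.map_inf_map x y
    _ ≤ c y := inf_le_right

theorem map_map (hc : IsCylindrification c) (x : B) : c (c x) = c x :=
  le_antisymm (by simpa using (hc.map_inf_map ⊤ x).le.trans inf_le_right) (hc.le_map _)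

theorem map_le_of_le_map (hc : IsCylindrification c) {x y : B} (h : x ≤ c y) : c x ≤ c y :=
  (hc.monotone h).trans (hc.map_map y).le

theorem disjoint_map_of_disjoint (hc : IsCylindrification c) {x y : B} (h : Disjoint x (c y)) :
    Disjoint (c x) (c y) := by
  rw [disjoint_iff, ← hc.map_inf_map, h.eq_bot, hc.map_bot]

end IsCylindrification

section Literal

variable {B : Type*} [BooleanAlgebra B]

theorem disjoint_lit_lit (d : B) {s t : Bool} (h : s ≠ t) : Disjoint (lit d s) (lit d t) := by
  cases s <;> cases t <;> simp_all [lit, disjoint_compl_left, disjoint_compl_right]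

theorem sup_inf_lit_eq_top {J : Type*} [Fintype J] [DecidableEq J] (f : J → B) :
    (univ.sup fun s : J → Bool => univ.inf fun j => lit (f j) (s j)) = ⊤ := by
  refine top_le_iff.1 ?_
  calc (⊤ : B) = univ.inf fun j => univ.sup fun b => lit (f j) b := by simp [lit]
    _ = (univ.pi fun _ : J => (univ : Finset Bool)).sup fun g =>
          univ.attach.inf fun j : {j // j ∈ (univ : Finset J)} => lit (f j) (g j.1 j.2) :=
        inf_sup _ _ _
    _ ≤ _ := Finset.sup_le fun g _ => le_sup_of_le (mem_univ fun j => g j (mem_univ j)) <|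
        Finset.le_inf fun j _ => inf_le (f := fun j : {j // j ∈ (univ : Finset J)} =>
          lit (f j) (g j.1 j.2)) (mem_attach _ ⟨j, mem_univ j⟩)

end Literal

section NormalForm

variable {X ι : Type u} [Fintype X] [Fintype ι] {B : Type*} [BooleanAlgebra B]
  (v : X → B) (c : ι → B → B)

theorem nf_zero_le_lit (a : Ix X ι 0) (x : X) : nf v c 0 a ≤ lit (v x) (a x) :=
  inf_le (mem_univ x)

theorem nf_succ_le_lit_var {k : ℕ} (a : Ix X ι (k + 1)) (x : X) :
    nf v c (k + 1) a ≤ lit (v x) (a.1 x) :=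
  inf_le_left.trans (inf_le (mem_univ x))

theorem nf_succ_le_lit {k : ℕ} (a : Ix X ι (k + 1)) (p : ι × Ix X ι k) :
    nf v c (k + 1) a ≤ lit (c p.1 (nf v c k p.2)) (a.2 p) :=
  inf_le_right.trans (inf_le (mem_univ p))

theorem disjoint_nf :
    ∀ {k : ℕ} {a b : Ix X ι k}, a ≠ b → Disjoint (nf v c k a) (nf v c k b)
  | 0, a, b, h => by
    obtain ⟨x, hx⟩ := Function.ne_iff.1 h
    exact (disjoint_lit_lit _ hx).mono (nf_zero_le_lit v c a x) (nf_zero_le_lit v c b x)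
  | k + 1, a, b, h => by
    by_cases h₁ : a.1 = b.1
    · obtain ⟨p, hp⟩ := Function.ne_iff.1 fun h₂ : a.2 = b.2 => h (Prod.ext h₁ h₂)
      exact (disjoint_lit_lit _ hp).mono (nf_succ_le_lit v c a p) (nf_succ_le_lit v c b p)
    · obtain ⟨x, hx⟩ := Function.ne_iff.1 h₁
      exact (disjoint_lit_lit _ hx).mono (nf_succ_le_lit_var v c a x) (nf_succ_le_lit_var v c b x)

theorem sup_nf_eq_top : ∀ k : ℕ, univ.sup (nf (X := X) (ι := ι) v c k) = ⊤
  | 0 => by classical exact sup_inf_lit_eq_top v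
  | k + 1 => by
    classical
    refine top_le_iff.1 ?_
    calc (⊤ : B) = (univ.sup fun β : X → Bool => univ.inf fun x => lit (v x) (β x)) ⊓
          univ.sup fun γ : ι × Ix X ι k → Bool =>
            univ.inf fun p : ι × Ix X ι k => lit (c p.1 (nf v c k p.2)) (γ p) := by
          rw [sup_inf_lit_eq_top, sup_inf_lit_eq_top, inf_top_eq]
      _ = (univ ×ˢ univ).sup fun a => nf v c (k + 1) a := sup_inf_sup _ _ _ _
      _ ≤ _ := Finset.sup_le fun a _ => le_sup (f := nf v c (k + 1)) (mem_univ a)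

theorem nf_succ_eq_bot_of_forall_lit_false (hc : ∀ i, IsCylindrification (c i)) {k : ℕ}
    (a : Ix X ι (k + 1)) (i : ι) (h : ∀ τ, a.2 (i, τ) = false) : nf v c (k + 1) a = ⊥ := by
  have hdisj : Disjoint (nf v c (k + 1) a) (univ.sup (nf v c k)) :=
    Finset.disjoint_sup_right.2 fun τ _ => by
      have := nf_succ_le_lit v c a (i, τ)
      rw [h τ] at this
      exact disjoint_compl_left.mono this ((hc i).le_map _)
  rwa [sup_nf_eq_top, disjoint_top] at hdisj

end NormalForm

open Classical in
noncomputable def Ix.trunc {X ι : Type u} : ∀ k, Ix X ι (k + 1) → Ix X ι k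
  | 0, a => a.1
  | m + 1, a =>
    (a.1, fun q => decide (∃ τ : Ix X ι (m + 1), a.2 (q.1, τ) = true ∧ τ.2 q = true))

theorem Ix.trunc_snd_eq_true {X ι : Type u} {m : ℕ} (a : Ix X ι (m + 2)) (q : ι × Ix X ι m) :
    (Ix.trunc (m + 1) a).2 q = true ↔
      ∃ τ : Ix X ι (m + 1), a.2 (q.1, τ) = true ∧ τ.2 q = true := by
  simp [Ix.trunc]

section Truncation

variable {X ι : Type u} [Fintype X] [Fintype ι] {B : Type*} [BooleanAlgebra B]
  {v : X → B} {c : ι → B → B}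

theorem nf_le_lit_trunc (hc : ∀ i, IsCylindrification (c i)) {m : ℕ} (a : Ix X ι (m + 2))
    (p : ι × Ix X ι m) :
    nf v c (m + 2) a ≤ lit (c p.1 (nf v c m p.2)) ((Ix.trunc (m + 1) a).2 p) := by
  obtain ⟨i, σ⟩ := p
  by_cases hpos : ∃ τ : Ix X ι (m + 1), a.2 (i, τ) = true ∧ τ.2 (i, σ) = true
  · obtain ⟨τ, haτ, hτσ⟩ := hpos
    have hρτ := nf_succ_le_lit v c a (i, τ)
    have hτσ' := nf_succ_le_lit v c τ (i, σ)
    rw [haτ] at hρτ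
    rw [hτσ] at hτσ'
    rw [(Ix.trunc_snd_eq_true a (i, σ)).2 ⟨τ, haτ, hτσ⟩]
    exact hρτ.trans ((hc i).map_le_of_le_map hτσ')
  rw [Bool.eq_false_iff.2 (mt (Ix.trunc_snd_eq_true a (i, σ)).1 hpos)]
  simp only [not_exists, not_and, Bool.not_eq_true] at hpos
  by_cases hsome : ∃ τ : Ix X ι (m + 1), a.2 (i, τ) = true
  · obtain ⟨τ, haτ⟩ := hsome
    have hρτ := nf_succ_le_lit v c a (i, τ)
    have hτσ := nf_succ_le_lit v c τ (i, σ)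
    rw [haτ] at hρτ
    rw [hpos τ haτ] at hτσ
    have hdisj : Disjoint (nf v c (m + 1) τ) (c i (nf v c m σ)) :=
      disjoint_compl_left.mono_left hτσ
    exact le_compl_iff_disjoint_right.2 (((hc i).disjoint_map_of_disjoint hdisj).mono_left hρτ)
  · simp only [not_exists, Bool.not_eq_true] at hsome
    rw [nf_succ_eq_bot_of_forall_lit_false v c hc a i hsome]
    exact bot_le

theorem nf_succ_le_nf_trunc (hc : ∀ i, IsCylindrification (c i)) :
    ∀ (k : ℕ) (a : Ix X ι (k + 1)), nf v c (k + 1) a ≤ nf v c k (Ix.trunc k a)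
  | 0, _ => inf_le_left
  | _ + 1, a => le_inf inf_le_left (Finset.le_inf fun p _ => nf_le_lit_trunc hc a p)

end Truncation

theorem stmt_15_general {X ι : Type u} [Fintype X] [Fintype ι]
    (k : ℕ) (a : Ix X ι (k + 1))
    (hsat : ∃ (B : Type u) (instB : BooleanAlgebra B) (v : X → B) (c : ι → B → B),
      (∀ i, c i ⊥ = ⊥) ∧ (∀ i x, x ≤ c i x) ∧
      (∀ i x y, c i (x ⊓ c i y) = c i x ⊓ c i y) ∧
      @nf X ι B _ _ instB v c (k + 1) a ≠ ⊥) :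
    ∃! b : Ix X ι k,
      ∀ (B : Type u) [instB : BooleanAlgebra B] (v : X → B) (c : ι → B → B),
        (∀ i, c i ⊥ = ⊥) → (∀ i x, x ≤ c i x) →
        (∀ i x y, c i (x ⊓ c i y) = c i x ⊓ c i y) →
        nf v c (k + 1) a ≤ nf v c k b := by
  have hle : ∀ (B : Type u) [BooleanAlgebra B] (v : X → B) (c : ι → B → B),
      (∀ i, c i ⊥ = ⊥) → (∀ i x, x ≤ c i x) →
      (∀ i x y, c i (x ⊓ c i y) = c i x ⊓ c i y) →
      nf v c (k + 1) a ≤ nf v c k (Ix.trunc k a) :=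
    fun _ _ v c h₀ h₁ h₂ => nf_succ_le_nf_trunc (fun i => ⟨h₀ i, h₁ i, h₂ i⟩) k a
  refine ⟨Ix.trunc k a, hle, fun b hb => ?_⟩
  obtain ⟨B, _, v, c, h₀, h₁, h₂, hne⟩ := hsat
  by_contra hb_ne
  exact hne <| disjoint_self.1 <|
    (disjoint_nf v c hb_ne).mono (hb B v c h₀ h₁ h₂) (hle B v c h₀ h₁ h₂)

/-- If a normal form `ρ` of degree `k+1` is satisfiable in some algebra of the variety,
then there is a unique normal form `σ` of degree `k` such that `ρ ≤ σ` holds in every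
Boolean algebra with operators satisfying the three axioms. -/
theorem stmt_15 {X ι : Type u} [Fintype X] [Fintype ι]
    (hn : 2 ≤ Fintype.card ι) (k : ℕ) (a : Ix X ι (k + 1))
    (hsat : ∃ (B : Type u) (instB : BooleanAlgebra B) (v : X → B) (c : ι → B → B),
      (∀ i, c i ⊥ = ⊥) ∧ (∀ i x, x ≤ c i x) ∧
      (∀ i x y, c i (x ⊓ c i y) = c i x ⊓ c i y) ∧
      @nf X ι B _ _ instB v c (k + 1) a ≠ ⊥) :
    ∃! b : Ix X ι k,
      ∀ (B : Type u) [instB : BooleanAlgebra B] (v : X → B) (c : ι → B → B),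
        (∀ i, c i ⊥ = ⊥) → (∀ i x, x ≤ c i x) →
        (∀ i x y, c i (x ⊓ c i y) = c i x ⊓ c i y) →
        nf v c (k + 1) a ≤ nf v c k b :=
  stmt_15_general k a hsat
end

section
/- Let V₁ ⊆ ᵅU₁ and V₂ ⊆ ᵅU₂ be nonempty sets of α-sequences with disjoint bases U₁ ∩ U₂ = ∅. Then for each i ∈ α and each X ⊆ V₁ ∪ V₂, the cylindrification on V₁ ∪ V₂ decomposes: C_i^{[V₁∪V₂]}(X) = C_i^{[V₁]}(X ∩ V₁) ∪ C_i^{[V₂]}(X ∩ V₂). -/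
/-- The `V`-cylindrification in direction `i` (with `g` required to lie in `X ∩ V`). -/
def cyl {ι W : Type*} (V : Set (ι → W)) (i : ι) (X : Set (ι → W)) : Set (ι → W) :=
  {f | f ∈ V ∧ ∃ g ∈ X ∩ V, ∀ j, j ≠ i → f j = g j}

theorem stmt_17 {ι W : Type*} [Nontrivial ι] (U₁ U₂ : Set W)
    (V₁ V₂ : Set (ι → W)) (hV₁ : V₁.Nonempty) (hV₂ : V₂.Nonempty)
    (hU₁ : ∀ f ∈ V₁, ∀ j, f j ∈ U₁) (hU₂ : ∀ f ∈ V₂, ∀ j, f j ∈ U₂)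
    (hdisj : U₁ ∩ U₂ = ∅)
    (i : ι) (X : Set (ι → W)) (hX : X ⊆ V₁ ∪ V₂) :
    cyl (V₁ ∪ V₂) i X = cyl V₁ i (X ∩ V₁) ∪ cyl V₂ i (X ∩ V₂) := by
  obtain ⟨j, hji⟩ := exists_ne i
  have key : ∀ f ∈ V₁, ∀ g ∈ V₂, ¬ (∀ k, k ≠ i → f k = g k) := by
    intro f hf g hg h
    have : f j ∈ U₁ ∩ U₂ := ⟨hU₁ f hf j, h j hji ▸ hU₂ g hg j⟩
    simp [hdisj] at this
  ext f
  constructor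
  · rintro ⟨hf, g, ⟨hgX, hgV⟩, hfg⟩
    rcases hf with hf1 | hf2
    · left
      refine ⟨hf1, g, ⟨⟨hgX, ?_⟩, ?_⟩, hfg⟩ <;>
      · rcases hgV with h | h
        · exact h
        · exact absurd hfg (key f hf1 g h)
    · right
      refine ⟨hf2, g, ⟨⟨hgX, ?_⟩, ?_⟩, hfg⟩ <;>
      · rcases hgV with h | h
        · exact absurd (fun k hk => (hfg k hk).symm) (key g h f hf2)
        · exact h
  · rintro (⟨hf, g, ⟨⟨hgX, _⟩, hgV⟩, hfg⟩ | ⟨hf, g, ⟨⟨hgX, _⟩, hgV⟩, hfg⟩)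
    · exact ⟨Or.inl hf, g, ⟨hgX, Or.inl hgV⟩, hfg⟩
    · exact ⟨Or.inr hf, g, ⟨hgX, Or.inr hgV⟩, hfg⟩
end
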